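/- arXiv:1006.3020 — 2 statements merged into one kernel-verified Lean document; each statement's English description precedes it below -/
import Mathlib

section
/- Let G be a thin spider with body K = {k1,...,kn} and feet S = {s1,...,sn} (n ≥ 2), where ki is adjacent to sj iff i = j, and with empty head. Then the set of n−1 leg edges {si,ki} for i = 1,...,n−1 is a minimum-size edge set whose deletion makes G P4-free. -/
open SimpleGraph

/-- The four (distinct) vertices `a, b, c, d` induce a path `a - b - c - d` in `G`. -/
def IsInducedP4 {V : Type*} (G : SimpleGraph V) (a b c d : V) : Prop :=
  a ≠ b ∧ a ≠ c ∧ a ≠ d ∧ b ≠ c ∧ b ≠ d ∧ c ≠ d ∧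
  G.Adj a b ∧ G.Adj b c ∧ G.Adj c d ∧ ¬ G.Adj a c ∧ ¬ G.Adj a d ∧ ¬ G.Adj b d

/-- A graph is `P₄`-free if no four vertices induce a path on four vertices. -/
def P4Free {V : Type*} (G : SimpleGraph V) : Prop := ∀ a b c d : V, ¬ IsInducedP4 G a b c d

/-- The thin spider with empty head: body `K = {inl i}` is a clique, feet `S = {inr i}` form a
stable set, and `inl i` is adjacent to `inr j` iff `i = j` (a perfect matching of legs). -/
def thinSpider (n : ℕ) : SimpleGraph (Fin n ⊕ Fin n) :=
  SimpleGraph.fromRel (fun a b =>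
    match a, b with
    | Sum.inl i, Sum.inl j => i ≠ j
    | Sum.inl i, Sum.inr j => i = j
    | Sum.inr _, _ => False)


lemma ts_ll {n : ℕ} (i j : Fin n) : (thinSpider n).Adj (Sum.inl i) (Sum.inl j) ↔ i ≠ j := by
  simp [thinSpider, fromRel_adj]; tauto

lemma ts_lr {n : ℕ} (i j : Fin n) : (thinSpider n).Adj (Sum.inl i) (Sum.inr j) ↔ i = j := by
  simp [thinSpider, fromRel_adj]

lemma ts_rl {n : ℕ} (i j : Fin n) : (thinSpider n).Adj (Sum.inr i) (Sum.inl j) ↔ j = i := by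
  simp [thinSpider, fromRel_adj]

lemma ts_rr {n : ℕ} (i j : Fin n) : ¬ (thinSpider n).Adj (Sum.inr i) (Sum.inr j) := by
  simp [thinSpider, fromRel_adj]

section
variable (n : ℕ) (D : Finset (Sym2 (Fin n ⊕ Fin n)))
    (hD : D = (Finset.univ.filter (fun i : Fin n => (i : ℕ) < n - 1)).image
      (fun i : Fin n => s(Sum.inr i, Sum.inl i)))

include hD

lemma d_ll (i j : Fin n) :
    ((thinSpider n).deleteEdges ↑D).Adj (Sum.inl i) (Sum.inl j) ↔ i ≠ j := by
  rw [deleteEdges_adj, ts_ll]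
  simp [hD, Sym2.eq_iff]

lemma d_lr (i j : Fin n) :
    ((thinSpider n).deleteEdges ↑D).Adj (Sum.inl i) (Sum.inr j) ↔ i = j ∧ ¬ ((j:ℕ) < n-1) := by
  rw [deleteEdges_adj, ts_lr]
  simp only [hD, Finset.coe_image, Finset.coe_filter, Set.mem_image, Set.mem_setOf_eq,
    Sym2.eq_iff]
  aesop

lemma d_rl (i j : Fin n) :
    ((thinSpider n).deleteEdges ↑D).Adj (Sum.inr i) (Sum.inl j) ↔ i = j ∧ ¬ ((i:ℕ) < n-1) := by
  rw [← SimpleGraph.adj_comm, d_lr n D hD]; tauto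

set_option linter.unusedSectionVars false in
lemma d_rr (i j : Fin n) :
    ((thinSpider n).deleteEdges ↑D).Adj (Sum.inr i) (Sum.inr j) ↔ False := by
  rw [deleteEdges_adj]
  exact iff_false_intro (fun h => ts_rr i j h.1)

lemma spider_part2 : P4Free ((thinSpider n).deleteEdges ↑D) := by
  rintro (a|a) (b|b) (c|c) (d|d) ⟨h1,h2,h3,h4,h5,h6,h7,h8,h9,h10,h11,h12⟩ <;>
  · have ha := a.isLt
    have hb := b.isLt
    have hc := c.isLt
    have hd := d.isLt
    simp only [d_ll n D hD, d_lr n D hD, d_rl n D hD, d_rr n D hD, ne_eq,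
      Sum.inl.injEq, Sum.inr.injEq, Fin.ext_iff, reduceCtorEq, not_false_eq_true,
      not_true_eq_false] at h1 h2 h3 h4 h5 h6 h7 h8 h9 h10 h11 h12
    all_goals omega

end

lemma spider_key {n : ℕ} (E' : Finset (Sym2 (Fin n ⊕ Fin n)))
    (hP : P4Free ((thinSpider n).deleteEdges ↑E')) (i j : Fin n) (hij : i ≠ j)
    (hi : s(Sum.inr i, Sum.inl i) ∉ E') (hj : s(Sum.inr j, Sum.inl j) ∉ E') :
    s(Sum.inl i, Sum.inl j) ∈ E' := by
  by_contra hcl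
  apply hP (Sum.inr i) (Sum.inl i) (Sum.inl j) (Sum.inr j)
  refine ⟨by simp, by simp, by simp [hij], by simp [hij], by simp, by simp, ?_, ?_, ?_, ?_, ?_, ?_⟩
  · rw [deleteEdges_adj, ts_rl]; exact ⟨rfl, by simpa using hi⟩
  · rw [deleteEdges_adj, ts_ll]; exact ⟨hij, by simpa using hcl⟩
  · rw [deleteEdges_adj, ts_lr]
    refine ⟨rfl, ?_⟩
    rw [Finset.mem_coe, Sym2.eq_swap]
    exact hj
  · rw [deleteEdges_adj, ts_rl]
    exact fun h => hij h.1.symm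
  · rw [deleteEdges_adj]
    exact fun h => ts_rr i j h.1
  · rw [deleteEdges_adj, ts_lr]
    exact fun h => hij h.1

lemma spider_part3 {n : ℕ} (hn : 2 ≤ n) (E' : Finset (Sym2 (Fin n ⊕ Fin n)))
    (hP : P4Free ((thinSpider n).deleteEdges ↑E')) : n - 1 ≤ E'.card := by
  by_cases hB : ∃ j : Fin n, s(Sum.inr j, Sum.inl j) ∉ E'
  · obtain ⟨j0, hj0⟩ := hB
    set g : Fin n → Sym2 (Fin n ⊕ Fin n) := fun i =>
      if s(Sum.inr i, Sum.inl i) ∈ E' then s(Sum.inr i, Sum.inl i)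
      else s(Sum.inl i, Sum.inl j0) with hg
    have hmem : ∀ i ∈ Finset.univ.erase j0, g i ∈ E' := by
      intro i hi
      rw [Finset.mem_erase] at hi
      by_cases h : s(Sum.inr i, Sum.inl i) ∈ E'
      · simp [hg, h]
      · simpa [hg, h] using spider_key E' hP i j0 hi.1 h hj0
    have hinj : Set.InjOn g (Finset.univ.erase j0) := by
      intro x hx y hy hxy
      simp only [Finset.coe_erase, Set.mem_diff, Finset.mem_coe, Finset.mem_erase,
        Set.mem_singleton_iff] at hx hy
      by_cases h1 : s(Sum.inr x, Sum.inl x) ∈ E' <;>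
        by_cases h2 : s(Sum.inr y, Sum.inl y) ∈ E' <;>
        simp only [hg, h1, h2, if_true, if_false, Sym2.eq_iff] at hxy <;>
        aesop
    have := Finset.card_le_card_of_injOn g hmem hinj
    simpa [Finset.card_erase_of_mem] using this
  · push_neg at hB
    have hmem : ∀ i ∈ (Finset.univ : Finset (Fin n)),
        s(Sum.inr i, Sum.inl i) ∈ E' := fun i _ => hB i
    have hinj : Set.InjOn (fun i : Fin n => s(Sum.inr i, Sum.inl i))
        ↑(Finset.univ : Finset (Fin n)) := by
      intro x _ y _ hxy
      simpa [Sym2.eq_iff] using hxy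
    have := Finset.card_le_card_of_injOn _ hmem hinj
    simp only [Finset.card_univ, Fintype.card_fin] at this
    omega

/-- In the thin spider with empty head, body `{k₁, …, kₙ}` and feet
`{s₁, …, sₙ}` (`n ≥ 2`), the set of `n − 1` leg edges `{sᵢ, kᵢ}`, `i = 1, …, n − 1`,
is a minimum-size edge set whose deletion makes the graph `P₄`-free. -/
theorem thinSpider_min_cograph_edge_deletion (n : ℕ) (hn : 2 ≤ n)
    (D : Finset (Sym2 (Fin n ⊕ Fin n)))
    (hD : D = (Finset.univ.filter (fun i : Fin n => (i : ℕ) < n - 1)).image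
      (fun i : Fin n => s(Sum.inr i, Sum.inl i))) :
    D.card = n - 1 ∧ P4Free ((thinSpider n).deleteEdges ↑D) ∧
      ∀ E' : Finset (Sym2 (Fin n ⊕ Fin n)),
        P4Free ((thinSpider n).deleteEdges ↑E') → n - 1 ≤ E'.card := by
  refine ⟨?_, spider_part2 n D hD, fun E' hP => spider_part3 hn E' hP⟩
  rw [hD, Finset.card_image_of_injective _ (fun x y h => by simpa [Sym2.eq_iff] using h)]
  have h : (Finset.univ.filter (fun i : Fin n => (i : ℕ) < n - 1))
      = Finset.Iio (⟨n-1, by omega⟩ : Fin n) := by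
    ext i; simp [Fin.lt_def]
  rw [h, Fin.card_Iio]
end

section
/- Let G be a thin spider with empty head, body K and feet S, each of size n ≥ 2. Then the minimum number of vertices whose deletion makes G P4-free is exactly n − 1, achieved by deleting any n − 1 feet. -/
open SimpleGraph

theorem Finset.card_compl_le_one_iff {α : Type*} [Fintype α] [DecidableEq α] {s : Finset α} :
    sᶜ.card ≤ 1 ↔ Fintype.card α - 1 ≤ s.card := by
  rw [Finset.card_compl]
  have := s.card_le_univ
  omega

section P4Free

variable {V : Type*} {G : SimpleGraph V}

theorem IsInducedP4.induce {s : Set V} {a b c d : V} (h : IsInducedP4 G a b c d)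
    (ha : a ∈ s) (hb : b ∈ s) (hc : c ∈ s) (hd : d ∈ s) :
    IsInducedP4 (G.induce s) ⟨a, ha⟩ ⟨b, hb⟩ ⟨c, hc⟩ ⟨d, hd⟩ := by
  simpa [IsInducedP4] using h

/-- An induced `P₄` contains the two disjoint non-edges `ac` and `bd`, and each of them must meet
`s`. -/
theorem p4Free_of_adj_of_subsingleton (s : Set V) (hs : s.Subsingleton)
    (hadj : ∀ x y, x ∉ s → y ∉ s → x ≠ y → G.Adj x y) : P4Free G := by
  rintro a b c d ⟨hab, hac, had, hbc, hbd, hcd, -, -, -, hnac, -, hnbd⟩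
  have hac_s : a ∈ s ∨ c ∈ s := by
    by_contra! h
    exact hnac (hadj a c h.1 h.2 hac)
  have hbd_s : b ∈ s ∨ d ∈ s := by
    by_contra! h
    exact hnbd (hadj b d h.1 h.2 hbd)
  rcases hac_s with ha | hc <;> rcases hbd_s with hb | hd
  exacts [hab (hs ha hb), had (hs ha hd), hbc (hs hb hc), hcd (hs hc hd)]

end P4Free

namespace thinSpider

variable {n : ℕ}

@[simp]
theorem adj_inl_inl {i j : Fin n} : (thinSpider n).Adj (.inl i) (.inl j) ↔ i ≠ j := by
  simp [thinSpider, fromRel_adj]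
  tauto

@[simp]
theorem adj_inl_inr {i j : Fin n} : (thinSpider n).Adj (.inl i) (.inr j) ↔ i = j := by
  simp [thinSpider, fromRel_adj]

@[simp]
theorem adj_inr_inl {i j : Fin n} : (thinSpider n).Adj (.inr i) (.inl j) ↔ j = i := by
  simp [thinSpider, fromRel_adj]

@[simp]
theorem not_adj_inr_inr {i j : Fin n} : ¬(thinSpider n).Adj (.inr i) (.inr j) := by
  simp [thinSpider, fromRel_adj]

theorem isInducedP4_of_ne {i j : Fin n} (hij : i ≠ j) :
    IsInducedP4 (thinSpider n) (.inr i) (.inl i) (.inl j) (.inr j) := by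
  simp [IsInducedP4, hij, hij.symm]

theorem p4Free_induce_compl_feet {F : Finset (Fin n)} (hF : n - 1 ≤ F.card) :
    P4Free ((thinSpider n).induce
      (↑(F.image (Sum.inr : Fin n → Fin n ⊕ Fin n)) : Set (Fin n ⊕ Fin n))ᶜ) := by
  have hFc : Fᶜ.card ≤ 1 := Finset.card_compl_le_one_iff.mpr (by simpa using hF)
  refine p4Free_of_adj_of_subsingleton {x | x.1.isRight} ?_ ?_
  · rintro ⟨_ | i, hi⟩ hx ⟨_ | j, hj⟩ hy <;> simp at hx hy hi hj ⊢
    exact Finset.card_le_one.mp hFc i (by simpa) j (by simpa)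
  · rintro ⟨_ | i, hi⟩ ⟨_ | j, hj⟩ hx hy hxy <;> simp_all

/-- Distinct legs `i ≠ j` both missed by `X` would leave the induced `P₄`
`inr i - inl i - inl j - inr j`, so `X` meets all legs but one. -/
theorem le_card_of_p4Free_induce_compl {X : Finset (Fin n ⊕ Fin n)}
    (hX : P4Free ((thinSpider n).induce (↑X : Set (Fin n ⊕ Fin n))ᶜ)) : n - 1 ≤ X.card := by
  set legs := X.image (Sum.elim id id)
  have hmissed : ∀ i ∉ legs, Sum.inl i ∉ X ∧ Sum.inr i ∉ X := fun i hi =>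
    ⟨fun h => hi (Finset.mem_image_of_mem _ h), fun h => hi (Finset.mem_image_of_mem _ h)⟩
  have hlegsc : legsᶜ.card ≤ 1 := Finset.card_le_one.mpr fun i hi j hj => by
    by_contra hij
    obtain ⟨hi₁, hi₂⟩ := hmissed i (Finset.mem_compl.mp hi)
    obtain ⟨hj₁, hj₂⟩ := hmissed j (Finset.mem_compl.mp hj)
    exact hX _ _ _ _ ((isInducedP4_of_ne hij).induce hi₂ hi₁ hj₁ hj₂)
  calc n - 1 ≤ legs.card := by simpa using Finset.card_compl_le_one_iff.mp hlegsc
    _ ≤ X.card := Finset.card_image_le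

end thinSpider

theorem thinSpider_min_cograph_vertex_deletion_general (n : ℕ) :
    (∀ F : Finset (Fin n), F.card = n - 1 →
      P4Free ((thinSpider n).induce ((↑(F.image (Sum.inr : Fin n → Fin n ⊕ Fin n)) : Set (Fin n ⊕ Fin n))ᶜ))) ∧
    (∀ X : Finset (Fin n ⊕ Fin n),
      P4Free ((thinSpider n).induce ((↑X : Set (Fin n ⊕ Fin n))ᶜ)) → n - 1 ≤ X.card) :=
  ⟨fun _ hF => thinSpider.p4Free_induce_compl_feet hF.ge,
    fun _ => thinSpider.le_card_of_p4Free_induce_compl⟩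

/-- In the thin spider with empty head, body and feet each of size `n ≥ 2`,
the minimum number of vertices whose deletion makes the graph `P₄`-free is exactly `n − 1`,
and this is achieved by deleting any `n − 1` feet. -/
theorem thinSpider_min_cograph_vertex_deletion (n : ℕ) (hn : 2 ≤ n) :
    (∀ F : Finset (Fin n), F.card = n - 1 →
      P4Free ((thinSpider n).induce ((↑(F.image (Sum.inr : Fin n → Fin n ⊕ Fin n)) : Set (Fin n ⊕ Fin n))ᶜ))) ∧
    (∀ X : Finset (Fin n ⊕ Fin n),
      P4Free ((thinSpider n).induce ((↑X : Set (Fin n ⊕ Fin n))ᶜ)) → n - 1 ≤ X.card) :=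
  thinSpider_min_cograph_vertex_deletion_general n
end
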